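/- arXiv:2604.17765 — 2 statements merged into one kernel-verified Lean document; each statement's English description precedes it below -/
import Mathlib

section
/- Under the standing hypotheses, if τ is a state on M that is h-independent over R, then |I_τ|^{1/h} + |J_τ|^{1/h} ≤ 2√2. -/
/-!
Cauchy–Schwarz for the state, together with `‖∏_{j ∉ R} A_{j,0}‖ ≤ 1`, gives
`|I_τ|² ≤ τ(P²)` for `P = ∏_{i ∈ R} (A_{i,0} + A_{i,1})`. The factors of `P` commute, so
`P² = ∏_{i ∈ R} (A_{i,0} + A_{i,1})²` and independence yields `|I_τ|² ≤ ∏_{i ∈ R} σ_i` with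
`σ_i = τ((A_{i,0} + A_{i,1})²)`; likewise `|J_τ|² ≤ ∏_{i ∈ R} δ_i`. By AM–GM,
`|I_τ|^{1/h} ≤ (1/h) ∑ √σ_i`, and the parallelogram law
`σ_i + δ_i = 2 τ(A_{i,0}²) + 2 τ(A_{i,1}²) ≤ 4` gives `√σ_i + √δ_i ≤ 2√2` for every party.
-/

open scoped ComplexOrder

/-- Product of `f` over a finite set of indices, taken in increasing index order.
(In our applications the factors mutually commute, so the order is immaterial.) -/
noncomputable def ordProd {M : Type*} [Monoid M] {m : ℕ}
    (s : Finset (Fin m)) (f : Fin m → M) : M :=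
  ((s.sort (· ≤ ·)).map f).prod

section OrderedProduct

open Function

variable {M : Type*} {m : ℕ}

lemma ordProd_eq_noncommProd [Monoid M] (s : Finset (Fin m)) (f : Fin m → M)
    (hf : (s : Set (Fin m)).Pairwise (Commute on f)) :
    ordProd s f = s.noncommProd f hf := by
  have h := Finset.noncommProd_toFinset (s.sort (· ≤ ·)) f (by simpa using hf) (s.sort_nodup _)
  simp only [Finset.sort_toFinset] at h
  exact h.symm

lemma ordProd_mul_self [Monoid M] (s : Finset (Fin m)) (f : Fin m → M)
    (hf : (s : Set (Fin m)).Pairwise (Commute on f)) :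
    ordProd s f * ordProd s f = ordProd s (f * f) := by
  rw [ordProd_eq_noncommProd s f hf, ← Finset.noncommProd_mul_distrib f f hf hf hf,
    ordProd_eq_noncommProd]

lemma IsSelfAdjoint.ordProd [Monoid M] [StarMul M] {s : Finset (Fin m)} {f : Fin m → M}
    (hsa : ∀ i ∈ s, IsSelfAdjoint (f i)) (hf : (s : Set (Fin m)).Pairwise (Commute on f)) :
    IsSelfAdjoint (ordProd s f) := by
  rw [ordProd_eq_noncommProd s f hf]
  induction s using Finset.cons_induction with
  | empty => exact IsSelfAdjoint.one M
  | cons a s ha ih =>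
    rw [Finset.noncommProd_cons]
    have hP := ih (fun i hi => hsa i (Finset.mem_cons_of_mem hi))
      (hf.mono fun _ => Finset.mem_cons_of_mem)
    have hc := Finset.noncommProd_commute s f (hf.mono fun _ => Finset.mem_cons_of_mem) (f a)
      fun i hi => hf.of_refl (Finset.mem_cons_self a s) (Finset.mem_cons_of_mem hi)
    rw [IsSelfAdjoint, star_mul, hP.star_eq, (hsa a (Finset.mem_cons_self a s)).star_eq, hc.eq]

lemma norm_ordProd_le_one [NormedRing M] [NormOneClass M] {s : Finset (Fin m)} {f : Fin m → M}
    (hf : ∀ i ∈ s, ‖f i‖ ≤ 1) : ‖ordProd s f‖ ≤ 1 := by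
  refine (List.norm_prod_le _).trans ?_
  rw [List.map_map, ← List.prod_toFinset _ (s.sort_nodup _), Finset.sort_toFinset]
  exact Finset.prod_le_one (fun _ _ => norm_nonneg _) hf

end OrderedProduct

lemma map_nonneg_of_forall_star_mul_self {R N F : Type*} [NonUnitalSemiring R] [StarRing R]
    [PartialOrder R] [StarOrderedRing R] [AddCommMonoid N] [PartialOrder N] [IsOrderedAddMonoid N]
    [FunLike F R N] [AddMonoidHomClass F R N] (f : F) (hf : ∀ s, 0 ≤ f (star s * s)) {x : R}
    (hx : 0 ≤ x) : 0 ≤ f x := by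
  rw [StarOrderedRing.nonneg_iff] at hx
  induction hx using AddSubmonoid.closure_induction with
  | mem x hx => obtain ⟨s, rfl⟩ := hx; exact hf s
  | zero => simp
  | add x y _ _ hx hy => rw [map_add]; exact add_nonneg hx hy

section CStarAlgebra

variable {A : Type*} [CStarAlgebra A] [PartialOrder A] [StarOrderedRing A]

lemma IsSelfAdjoint.norm_le_one {a : A} (ha : IsSelfAdjoint a) (h₁ : -1 ≤ a) (h₂ : a ≤ 1) :
    ‖a‖ ≤ 1 := by
  nontriviality A
  have hle : ∀ x ∈ spectrum ℝ a, x ≤ 1 := by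
    rw [← le_algebraMap_iff_spectrum_le ha]
    simpa using h₂
  have hge : ∀ x ∈ spectrum ℝ a, -1 ≤ x := by
    rw [← algebraMap_le_iff_le_spectrum ha]
    simpa using h₁
  rcases CStarAlgebra.norm_or_neg_norm_mem_spectrum ha with hmem | hmem
  · exact hle _ hmem
  · linarith [hge _ hmem]

namespace PositiveLinearMap

variable (φ : A →ₚ[ℂ] ℂ)

lemma sq_norm_apply_star_mul_le (a b : A) :
    ‖φ (star a * b)‖ ^ 2 ≤ (φ (star a * a)).re * (φ (star b * b)).re := by
  have hsq (c : A) : ‖φ.toPreGNS c‖ ^ 2 = (φ (star c * c)).re :=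
    Real.sq_sqrt (φ.map_nonneg (star_mul_self_nonneg c)).1
  rw [← hsq, ← hsq, ← mul_pow]
  exact pow_le_pow_left₀ (norm_nonneg _)
    (norm_inner_le_norm (𝕜 := ℂ) (φ.toPreGNS a) (φ.toPreGNS b)) 2

lemma re_apply_star_mul_self_le_one (hφ : φ 1 = 1) {b : A} (hb : ‖b‖ ≤ 1) :
    (φ (star b * b)).re ≤ 1 := by
  calc (φ (star b * b)).re ≤ ‖φ (star b * b)‖ := Complex.re_le_norm _
    _ ≤ ‖φ 1‖ * ‖star b * b‖ := φ.norm_apply_le_of_nonneg _ (star_mul_self_nonneg b)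
    _ = ‖b‖ * ‖b‖ := by rw [hφ, norm_one, one_mul, CStarRing.norm_star_mul_self]
    _ ≤ 1 := mul_le_one₀ hb (norm_nonneg b) hb

lemma re_apply_mul_self_nonneg {p : A} (hp : IsSelfAdjoint p) : 0 ≤ (φ (p * p)).re := by
  simpa [hp.star_eq] using (φ.map_nonneg (star_mul_self_nonneg p)).1

lemma sq_norm_apply_mul_le (hφ : φ 1 = 1) {p b : A} (hp : IsSelfAdjoint p) (hb : ‖b‖ ≤ 1) :
    ‖φ (p * b)‖ ^ 2 ≤ (φ (p * p)).re := by
  calc ‖φ (p * b)‖ ^ 2 ≤ (φ (p * p)).re * (φ (star b * b)).re := by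
        simpa [hp.star_eq] using φ.sq_norm_apply_star_mul_le p b
    _ ≤ (φ (p * p)).re :=
        mul_le_of_le_one_right (φ.re_apply_mul_self_nonneg hp)
          (φ.re_apply_star_mul_self_le_one hφ hb)

lemma re_apply_parallelogram_le_four (hφ : φ 1 = 1) {a b : A} (ha : ‖a‖ ≤ 1)
    (hb : ‖b‖ ≤ 1) :
    (φ (star (a + b) * (a + b))).re + (φ (star (a - b) * (a - b))).re ≤ 4 := by
  have hpar : star (a + b) * (a + b) + star (a - b) * (a - b)
      = star a * a + star a * a + (star b * b + star b * b) := by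
    simp only [star_add, star_sub]
    noncomm_ring
  have ha' := φ.re_apply_star_mul_self_le_one hφ ha
  have hb' := φ.re_apply_star_mul_self_le_one hφ hb
  rw [← Complex.add_re, ← map_add, hpar]
  simp only [map_add, Complex.add_re]
  linarith

open Function in
lemma sq_norm_apply_ordProd_mul_le (hφ : φ 1 = 1) {m : ℕ} {R t : Finset (Fin m)}
    {f g : Fin m → A} (hf : ∀ i ∈ R, IsSelfAdjoint (f i))
    (hfc : (R : Set (Fin m)).Pairwise (Commute on f)) (hg : ∀ i ∈ t, ‖g i‖ ≤ 1)
    (hind : φ (ordProd R (f * f)) = ∏ i ∈ R, φ (f i * f i)) :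
    ‖φ (ordProd R f * ordProd t g)‖ ^ 2 ≤ ∏ i ∈ R, (φ (f i * f i)).re := by
  -- `NormOneClass A`, needed for `norm_ordProd_le_one`, requires `Nontrivial A`.
  have : Nontrivial A := ⟨1, 0, fun h => by simp [h] at hφ⟩
  have hreal (i : Fin m) (hi : i ∈ R) : ((φ (f i * f i)).re : ℂ) = φ (f i * f i) := by
    have := φ.map_nonneg (star_mul_self_nonneg (f i))
    rw [(hf i hi).star_eq] at this
    exact Complex.conj_eq_iff_re.mp this.star_eq
  calc ‖φ (ordProd R f * ordProd t g)‖ ^ 2 ≤ (φ (ordProd R f * ordProd R f)).re :=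
        φ.sq_norm_apply_mul_le hφ (IsSelfAdjoint.ordProd hf hfc) (norm_ordProd_le_one hg)
    _ = ∏ i ∈ R, (φ (f i * f i)).re := by
        rw [ordProd_mul_self R f hfc, hind, ← Complex.ofReal_re (∏ i ∈ R, (φ (f i * f i)).re),
          Complex.ofReal_prod, Finset.prod_congr rfl hreal]

end PositiveLinearMap

end CStarAlgebra

namespace Real

open Finset

lemma rpow_one_div_card_le_of_sq_le_prod {ι : Type*} {s : Finset ι} (hs : s.Nonempty) {x : ℝ}
    {f : ι → ℝ} (hx : 0 ≤ x) (hf : ∀ i ∈ s, 0 ≤ f i) (hxf : x ^ 2 ≤ ∏ i ∈ s, f i) :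
    x ^ (1 / (#s : ℝ)) ≤ (∑ i ∈ s, √(f i)) / #s := by
  have hx' : x ≤ ∏ i ∈ s, √(f i) := by
    rw [← sqrt_prod s hf]
    exact le_sqrt_of_sq_le hxf
  have hamgm := geom_mean_le_arith_mean s (fun _ => 1) (fun i => √(f i)) (fun _ _ => zero_le_one)
    (by simpa using hs.card_pos) (fun _ _ => sqrt_nonneg _)
  simp only [rpow_one, sum_const, nsmul_eq_mul, mul_one, one_mul] at hamgm
  rw [one_div]
  exact (rpow_le_rpow hx hx' (by positivity)).trans hamgm

lemma sqrt_add_sqrt_le_two_mul_sqrt_two {a b : ℝ} (ha : 0 ≤ a) (hb : 0 ≤ b) (hab : a + b ≤ 4) :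
    √a + √b ≤ 2 * √2 := by
  have h8 : 2 * √2 = √8 := by
    rw [show (8 : ℝ) = 2 ^ 2 * 2 by norm_num, sqrt_mul (by norm_num), sqrt_sq (by norm_num)]
  rw [h8]
  apply le_sqrt_of_sq_le
  nlinarith [sq_sqrt ha, sq_sqrt hb, sq_nonneg (√a - √b)]

lemma rpow_one_div_card_add_le_two_mul_sqrt_two {ι : Type*} {s : Finset ι} (hs : s.Nonempty)
    {x y : ℝ} {σ δ : ι → ℝ} (hx : 0 ≤ x) (hy : 0 ≤ y) (hσ : ∀ i ∈ s, 0 ≤ σ i)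
    (hδ : ∀ i ∈ s, 0 ≤ δ i) (hσδ : ∀ i ∈ s, σ i + δ i ≤ 4)
    (hxσ : x ^ 2 ≤ ∏ i ∈ s, σ i) (hyδ : y ^ 2 ≤ ∏ i ∈ s, δ i) :
    x ^ (1 / (#s : ℝ)) + y ^ (1 / (#s : ℝ)) ≤ 2 * √2 := by
  have hcard : (0 : ℝ) < #s := by exact_mod_cast hs.card_pos
  calc x ^ (1 / (#s : ℝ)) + y ^ (1 / (#s : ℝ))
      ≤ (∑ i ∈ s, √(σ i)) / #s + (∑ i ∈ s, √(δ i)) / #s :=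
        add_le_add (rpow_one_div_card_le_of_sq_le_prod hs hx hσ hxσ)
          (rpow_one_div_card_le_of_sq_le_prod hs hy hδ hyδ)
    _ = (∑ i ∈ s, (√(σ i) + √(δ i))) / #s := by rw [sum_add_distrib, add_div]
    _ ≤ (∑ _i ∈ s, 2 * √2) / #s := by
        gcongr with i hi
        exact sqrt_add_sqrt_le_two_mul_sqrt_two (hσ i hi) (hδ i hi) (hσδ i hi)
    _ = 2 * √2 := by rw [sum_const, nsmul_eq_mul]; field_simp

end Real

theorem bell_type_inequality_upper_bound_general
    {M : Type*} [NormedRing M] [StarRing M] [CStarRing M] [CompleteSpace M]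
    [NormedAlgebra ℂ M] [StarModule ℂ M] [PartialOrder M] [StarOrderedRing M]
    {m : ℕ}
    (Msub : Fin m → StarSubalgebra ℂ M)
    (hcomm : ∀ i j : Fin m, i ≠ j → ∀ x ∈ Msub i, ∀ y ∈ Msub j, Commute x y)
    (A0 A1 : Fin m → M)
    (hA0mem : ∀ i, A0 i ∈ Msub i) (hA1mem : ∀ i, A1 i ∈ Msub i)
    (hA0sa : ∀ i, IsSelfAdjoint (A0 i)) (hA1sa : ∀ i, IsSelfAdjoint (A1 i))
    (hA0c : ∀ i, -1 ≤ A0 i ∧ A0 i ≤ 1) (hA1c : ∀ i, -1 ≤ A1 i ∧ A1 i ≤ 1)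
    (R : Finset (Fin m)) (h : ℕ) (hh : 2 ≤ h) (hcard : R.card = h)
    (τ : M →ₗ[ℂ] ℂ)
    (hτpos : ∀ a : M, 0 ≤ τ (star a * a)) (hτ1 : τ 1 = 1)
    (hind : ∀ x : Fin m → M, (∀ i ∈ R, x i ∈ Msub i) →
      τ (ordProd R x) = ∏ i ∈ R, τ (x i)) :
    ‖τ (ordProd R (fun i => A0 i + A1 i) * ordProd Rᶜ A0)‖ ^ (1 / (h : ℝ)) +
      ‖τ (ordProd R (fun i => A0 i - A1 i) * ordProd Rᶜ A1)‖ ^ (1 / (h : ℝ)) ≤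
      2 * Real.sqrt 2 := by
  let _ : CStarAlgebra M := { ‹NormedRing M›, ‹StarRing M›, ‹CStarRing M›, ‹NormedAlgebra ℂ M›,
    ‹StarModule ℂ M›, ‹CompleteSpace M› with }
  let φ : M →ₚ[ℂ] ℂ := .mk₀ τ fun _ => map_nonneg_of_forall_star_mul_self τ hτpos
  have hpair {f : Fin m → M} (hf : ∀ i, f i ∈ Msub i) :
      (R : Set (Fin m)).Pairwise (Function.onFun Commute f) :=
    fun i _ j _ hij => hcomm i j hij _ (hf i) _ (hf j)
  have hA0n (i : Fin m) : ‖A0 i‖ ≤ 1 := (hA0sa i).norm_le_one (hA0c i).1 (hA0c i).2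
  have hA1n (i : Fin m) : ‖A1 i‖ ≤ 1 := (hA1sa i).norm_le_one (hA1c i).1 (hA1c i).2
  have hu (i : Fin m) : A0 i + A1 i ∈ Msub i := add_mem (hA0mem i) (hA1mem i)
  have hv (i : Fin m) : A0 i - A1 i ∈ Msub i := sub_mem (hA0mem i) (hA1mem i)
  have husa (i : Fin m) : IsSelfAdjoint (A0 i + A1 i) := (hA0sa i).add (hA1sa i)
  have hvsa (i : Fin m) : IsSelfAdjoint (A0 i - A1 i) := (hA0sa i).sub (hA1sa i)
  have hI := φ.sq_norm_apply_ordProd_mul_le hτ1 (t := Rᶜ) (fun i _ => husa i) (hpair hu)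
    (fun i _ => hA0n i) (hind _ fun i _ => mul_mem (hu i) (hu i))
  have hJ := φ.sq_norm_apply_ordProd_mul_le hτ1 (t := Rᶜ) (fun i _ => hvsa i) (hpair hv)
    (fun i _ => hA1n i) (hind _ fun i _ => mul_mem (hv i) (hv i))
  subst hcard
  refine Real.rpow_one_div_card_add_le_two_mul_sqrt_two (Finset.card_pos.mp (by omega))
    (norm_nonneg _) (norm_nonneg _) (fun i _ => φ.re_apply_mul_self_nonneg (husa i))
    (fun i _ => φ.re_apply_mul_self_nonneg (hvsa i)) (fun i _ => ?_) hI hJ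
  simpa only [(husa i).star_eq, (hvsa i).star_eq] using
    φ.re_apply_parallelogram_le_four hτ1 (hA0n i) (hA1n i)

theorem bell_type_inequality_upper_bound
    {M : Type*} [NormedRing M] [StarRing M] [CStarRing M] [CompleteSpace M]
    [NormedAlgebra ℂ M] [StarModule ℂ M] [PartialOrder M] [StarOrderedRing M]
    {m : ℕ} (hm : 2 ≤ m)
    (Msub : Fin m → StarSubalgebra ℂ M)
    (hcomm : ∀ i j : Fin m, i ≠ j → ∀ x ∈ Msub i, ∀ y ∈ Msub j, Commute x y)
    (A0 A1 : Fin m → M)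
    (hA0mem : ∀ i, A0 i ∈ Msub i) (hA1mem : ∀ i, A1 i ∈ Msub i)
    (hA0sa : ∀ i, IsSelfAdjoint (A0 i)) (hA1sa : ∀ i, IsSelfAdjoint (A1 i))
    (hA0c : ∀ i, -1 ≤ A0 i ∧ A0 i ≤ 1) (hA1c : ∀ i, -1 ≤ A1 i ∧ A1 i ≤ 1)
    (R : Finset (Fin m)) (h : ℕ) (hh : 2 ≤ h) (hcard : R.card = h)
    (τ : M →ₗ[ℂ] ℂ)
    (hτpos : ∀ a : M, 0 ≤ τ (star a * a)) (hτ1 : τ 1 = 1)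
    (hind : ∀ x : Fin m → M, (∀ i ∈ R, x i ∈ Msub i) →
      τ (ordProd R x) = ∏ i ∈ R, τ (x i)) :
    ‖τ (ordProd R (fun i => A0 i + A1 i) * ordProd Rᶜ A0)‖ ^ (1 / (h : ℝ)) +
      ‖τ (ordProd R (fun i => A0 i - A1 i) * ordProd Rᶜ A1)‖ ^ (1 / (h : ℝ)) ≤
      2 * Real.sqrt 2 :=
  bell_type_inequality_upper_bound_general Msub hcomm A0 A1 hA0mem hA1mem hA0sa hA1sa hA0c hA1c R h
    hh hcard τ hτpos hτ1 hind
end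

section
/- Under the standing hypotheses, if τ is a state on M that is h-independent over R, then τ( ∏_{i∈R} (A_{i,0}+A_{i,1})² )^{1/h} + τ( ∏_{i∈R} (A_{i,0}−A_{i,1})² )^{1/h} ≤ 4. -/
/-!
By independence, both terms are geometric means of the nonnegative numbers
`τ((A₀ᵢ + A₁ᵢ)²)` and `τ((A₀ᵢ - A₁ᵢ)²)`, so by AM-GM their sum is at most the mean over `i ∈ R` of
`τ((A₀ᵢ + A₁ᵢ)²) + τ((A₀ᵢ - A₁ᵢ)²) = 2 τ(A₀ᵢ²) + 2 τ(A₁ᵢ²)`, which is at most `4` because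
contractions satisfy `A² ≤ 1`.
-/

open scoped ComplexOrder

open Finset

lemma Real.geom_mean_le_arith_mean_unweighted {ι : Type*} {s : Finset ι} (hs : s.Nonempty)
    {a : ι → ℝ} (ha : ∀ i ∈ s, 0 ≤ a i) :
    (∏ i ∈ s, a i) ^ (1 / (#s : ℝ)) ≤ ∑ i ∈ s, 1 / (#s : ℝ) * a i := by
  rw [← Real.finsetProd_rpow s a ha]
  refine Real.geom_mean_le_arith_mean_weighted s _ a (fun _ _ => by positivity) ?_ ha
  rw [sum_const, nsmul_eq_mul, mul_one_div_cancel (by exact_mod_cast hs.card_pos.ne')]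

lemma Real.geom_mean_add_geom_mean_le {ι : Type*} {s : Finset ι} (hs : s.Nonempty)
    {a b : ι → ℝ} {c : ℝ} (ha : ∀ i ∈ s, 0 ≤ a i) (hb : ∀ i ∈ s, 0 ≤ b i)
    (hab : ∀ i ∈ s, a i + b i ≤ c) :
    (∏ i ∈ s, a i) ^ (1 / (#s : ℝ)) + (∏ i ∈ s, b i) ^ (1 / (#s : ℝ)) ≤ c := by
  have hcard : (#s : ℝ) ≠ 0 := by exact_mod_cast hs.card_pos.ne'
  calc _ ≤ ∑ i ∈ s, 1 / (#s : ℝ) * a i + ∑ i ∈ s, 1 / (#s : ℝ) * b i :=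
        add_le_add (geom_mean_le_arith_mean_unweighted hs ha)
          (geom_mean_le_arith_mean_unweighted hs hb)
    _ = ∑ i ∈ s, 1 / (#s : ℝ) * (a i + b i) := by simp only [mul_add, sum_add_distrib]
    _ ≤ ∑ _i ∈ s, 1 / (#s : ℝ) * c := sum_le_sum fun i hi => by gcongr; exact hab i hi
    _ = c := by rw [sum_const, nsmul_eq_mul]; field_simp

lemma Complex.re_prod_of_nonneg {ι : Type*} {s : Finset ι} {z : ι → ℂ} (hz : ∀ i ∈ s, 0 ≤ z i) :
    (∏ i ∈ s, z i).re = ∏ i ∈ s, (z i).re := by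
  rw [prod_congr rfl fun i hi => Complex.eq_re_of_ofReal_le (r := 0) (by simpa using hz i hi),
    ← Complex.ofReal_prod, Complex.ofReal_re]

section CStarAlgebra

variable {A : Type*} [CStarAlgebra A] [PartialOrder A] [StarOrderedRing A]

lemma IsSelfAdjoint.sq_le_one_of_neg_one_le_of_le_one {a : A} (ha : IsSelfAdjoint a)
    (h₁ : -1 ≤ a) (h₂ : a ≤ 1) : a ^ 2 ≤ 1 := by
  rw [← cfc_pow_id (R := ℝ) a 2]
  refine cfc_le_one _ a fun x hx => ?_
  have hx₁ : -1 ≤ x := (algebraMap_le_iff_le_spectrum (r := (-1 : ℝ))).mp (by simpa using h₁) x hx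
  have hx₂ : x ≤ 1 := (le_algebraMap_iff_spectrum_le (r := (1 : ℝ))).mp (by simpa using h₂) x hx
  nlinarith

noncomputable def PositiveLinearMap.ofStarMulSelf (τ : A →ₗ[ℂ] ℂ)
    (hτ : ∀ a, 0 ≤ τ (star a * a)) : A →ₚ[ℂ] ℂ :=
  .mk₀ τ fun _ hx => by
    obtain ⟨s, rfl⟩ := CStarAlgebra.nonneg_iff_eq_star_mul_self.mp hx
    exact hτ s

lemma PositiveLinearMap.re_apply_add_sq_add_re_apply_sub_sq_le_four (τ : A →ₚ[ℂ] ℂ)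
    (hτ1 : τ 1 = 1) {a b : A} (ha : IsSelfAdjoint a) (hb : IsSelfAdjoint b)
    (ha₁ : -1 ≤ a) (ha₂ : a ≤ 1) (hb₁ : -1 ≤ b) (hb₂ : b ≤ 1) :
    (τ ((a + b) ^ 2)).re + (τ ((a - b) ^ 2)).re ≤ 4 := by
  have hτa : τ (a ^ 2) ≤ 1 := hτ1 ▸ τ.monotone' (ha.sq_le_one_of_neg_one_le_of_le_one ha₁ ha₂)
  have hτb : τ (b ^ 2) ≤ 1 := hτ1 ▸ τ.monotone' (hb.sq_le_one_of_neg_one_le_of_le_one hb₁ hb₂)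
  have parallelogram : (a + b) ^ 2 + (a - b) ^ 2 = 2 • (a ^ 2 + b ^ 2) := by noncomm_ring
  have : τ ((a + b) ^ 2) + τ ((a - b) ^ 2) ≤ 4 := by
    calc _ = 2 • (τ (a ^ 2) + τ (b ^ 2)) := by rw [← map_add, parallelogram, map_nsmul, map_add]
      _ ≤ 2 • (1 + 1) := by gcongr
      _ = 4 := by norm_num
  simpa using (Complex.le_def.mp this).1

end CStarAlgebra

theorem sum_of_rpow_products_le_four_general
    {M : Type*} [NormedRing M] [StarRing M] [CStarRing M] [CompleteSpace M]
    [NormedAlgebra ℂ M] [StarModule ℂ M] [PartialOrder M] [StarOrderedRing M]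
    {m : ℕ}
    (Msub : Fin m → StarSubalgebra ℂ M)
    (A0 A1 : Fin m → M)
    (hA0mem : ∀ i, A0 i ∈ Msub i) (hA1mem : ∀ i, A1 i ∈ Msub i)
    (hA0sa : ∀ i, IsSelfAdjoint (A0 i)) (hA1sa : ∀ i, IsSelfAdjoint (A1 i))
    (hA0c : ∀ i, -1 ≤ A0 i ∧ A0 i ≤ 1) (hA1c : ∀ i, -1 ≤ A1 i ∧ A1 i ≤ 1)
    (R : Finset (Fin m)) (h : ℕ) (hh : 2 ≤ h) (hcard : R.card = h)
    (τ : M →ₗ[ℂ] ℂ)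
    (hτpos : ∀ a : M, 0 ≤ τ (star a * a)) (hτ1 : τ 1 = 1)
    (hind : ∀ x : Fin m → M, (∀ i ∈ R, x i ∈ Msub i) →
      τ (ordProd R x) = ∏ i ∈ R, τ (x i)) :
    (τ (ordProd R (fun i => (A0 i + A1 i) ^ 2))).re ^ (1 / (h : ℝ)) +
      (τ (ordProd R (fun i => (A0 i - A1 i) ^ 2))).re ^ (1 / (h : ℝ)) ≤ 4 := by
  let _ : CStarAlgebra M := {}
  let φ := PositiveLinearMap.ofStarMulSelf τ hτpos
  have re_map_ordProd : ∀ x : Fin m → M, (∀ i ∈ R, x i ∈ Msub i) → (∀ i, 0 ≤ x i) →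
      (τ (ordProd R x)).re = ∏ i ∈ R, (τ (x i)).re := fun x hmem hx => by
    rw [hind x hmem]
    exact Complex.re_prod_of_nonneg fun i _ => φ.map_nonneg (hx i)
  have hsum_nonneg : ∀ i, 0 ≤ (A0 i + A1 i) ^ 2 := fun i => ((hA0sa i).add (hA1sa i)).sq_nonneg
  have hdiff_nonneg : ∀ i, 0 ≤ (A0 i - A1 i) ^ 2 := fun i => ((hA0sa i).sub (hA1sa i)).sq_nonneg
  rw [re_map_ordProd _ (fun i _ => pow_mem (add_mem (hA0mem i) (hA1mem i)) 2) hsum_nonneg,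
    re_map_ordProd _ (fun i _ => pow_mem (sub_mem (hA0mem i) (hA1mem i)) 2) hdiff_nonneg, ← hcard]
  exact Real.geom_mean_add_geom_mean_le (card_pos.mp (by omega))
    (fun i _ => (Complex.nonneg_iff.mp (φ.map_nonneg (hsum_nonneg i))).1)
    (fun i _ => (Complex.nonneg_iff.mp (φ.map_nonneg (hdiff_nonneg i))).1)
    fun i _ => φ.re_apply_add_sq_add_re_apply_sub_sq_le_four hτ1 (hA0sa i) (hA1sa i)
      (hA0c i).1 (hA0c i).2 (hA1c i).1 (hA1c i).2

theorem sum_of_rpow_products_le_four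
    {M : Type*} [NormedRing M] [StarRing M] [CStarRing M] [CompleteSpace M]
    [NormedAlgebra ℂ M] [StarModule ℂ M] [PartialOrder M] [StarOrderedRing M]
    {m : ℕ} (hm : 2 ≤ m)
    (Msub : Fin m → StarSubalgebra ℂ M)
    (hcomm : ∀ i j : Fin m, i ≠ j → ∀ x ∈ Msub i, ∀ y ∈ Msub j, Commute x y)
    (A0 A1 : Fin m → M)
    (hA0mem : ∀ i, A0 i ∈ Msub i) (hA1mem : ∀ i, A1 i ∈ Msub i)
    (hA0sa : ∀ i, IsSelfAdjoint (A0 i)) (hA1sa : ∀ i, IsSelfAdjoint (A1 i))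
    (hA0c : ∀ i, -1 ≤ A0 i ∧ A0 i ≤ 1) (hA1c : ∀ i, -1 ≤ A1 i ∧ A1 i ≤ 1)
    (R : Finset (Fin m)) (h : ℕ) (hh : 2 ≤ h) (hcard : R.card = h)
    (τ : M →ₗ[ℂ] ℂ)
    (hτpos : ∀ a : M, 0 ≤ τ (star a * a)) (hτ1 : τ 1 = 1)
    (hind : ∀ x : Fin m → M, (∀ i ∈ R, x i ∈ Msub i) →
      τ (ordProd R x) = ∏ i ∈ R, τ (x i)) :
    (τ (ordProd R (fun i => (A0 i + A1 i) ^ 2))).re ^ (1 / (h : ℝ)) +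
      (τ (ordProd R (fun i => (A0 i - A1 i) ^ 2))).re ^ (1 / (h : ℝ)) ≤ 4 :=
  sum_of_rpow_products_le_four_general Msub A0 A1 hA0mem hA1mem hA0sa hA1sa hA0c hA1c R h hh hcard τ
    hτpos hτ1 hind
end
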